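/- If w is a reduced word over {a,b,c,d} of length |w| > 1 representing an element of the level-1 stabilizer G₁ of the Grigorchuk group, then the lengths of the images |φ_L(w)| and |φ_R(w)| (as words) satisfy |φ_i(w)| < ½|w| + 1. -/

import Mathlib

/-- The alphabet `{a, b, c, d}` of generators of the Grigorchuk group. -/
inductive Glet : Type
  | a | b | c | d
deriving DecidableEq

/-- A word is reduced if it contains none of
`aa, bb, cc, dd, bc, cb, bd, db, cd, dc` as a factor. -/
def GrigReduced (w : List Glet) : Prop :=
  ∀ (u v : List Glet) (x y : Glet), w = u ++ [x, y] ++ v →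
    ¬(x = y ∨ (x ≠ Glet.a ∧ y ≠ Glet.a))

/-- The word-level left section map `φ_L`, defined on the generators of `G₁` by
`b ↦ a`, `c ↦ a`, `d ↦ 1`, `aba ↦ c`, `aca ↦ d`, `ada ↦ b`. -/
def phiL : List Glet → List Glet
  | [] => []
  | .b :: s => .a :: phiL s
  | .c :: s => .a :: phiL s
  | .d :: s => phiL s
  | .a :: .b :: .a :: s => .c :: phiL s
  | .a :: .c :: .a :: s => .d :: phiL s
  | .a :: .d :: .a :: s => .b :: phiL s
  | .a :: s => phiL s

/-- The word-level right section map `φ_R`, defined on the generators of `G₁` by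
`b ↦ c`, `c ↦ d`, `d ↦ b`, `aba ↦ a`, `aca ↦ a`, `ada ↦ 1`. -/
def phiR : List Glet → List Glet
  | [] => []
  | .b :: s => .c :: phiR s
  | .c :: s => .d :: phiR s
  | .d :: s => .b :: phiR s
  | .a :: .b :: .a :: s => .a :: phiR s
  | .a :: .c :: .a :: s => .a :: phiR s
  | .a :: .d :: .a :: s => phiR s
  | .a :: s => phiR s

/-!
In a reduced word the letters `b, c, d` are isolated, so they are separated by `a`'s and
`|w| ≤ 2·#a(w) + 1`. Each of `φ_L, φ_R` reads the word as a sequence of blocks, an `a` is either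
dropped or is part of a block `axa` sent to at most one letter, and every other letter is sent to at
most one letter; hence `|φ_i(w)| ≤ |w| - #a(w) ≤ (|w| + 1) / 2`.
-/

namespace GrigReduced

theorem of_cons {x : Glet} {t : List Glet} (h : GrigReduced (x :: t)) : GrigReduced t :=
  fun u v p q he => h (x :: u) v p q (by simp [he])

theorem eq_a_of_cons_cons {x y : Glet} {t : List Glet} (h : GrigReduced (x :: y :: t))
    (hx : x ≠ .a) : y = .a := by
  by_contra hy
  exact h [] t x y rfl (Or.inr ⟨hx, hy⟩)

/-- The second conjunct, for words starting with `a`, is what makes the induction go through. -/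
theorem length_le_count_a {w : List Glet} (h : GrigReduced w) :
    w.length ≤ 2 * w.count .a + 1 ∧ (w.head? = some .a → w.length ≤ 2 * w.count .a) := by
  induction w with
  | nil => simp
  | cons x t ih =>
    obtain ⟨ih, ih_a⟩ := ih h.of_cons
    by_cases hx : x = .a
    · subst hx
      simp only [List.length_cons, List.count_cons_self]
      omega
    · simp only [List.head?_cons, Option.some.injEq, hx, false_imp_iff, and_true,
        List.length_cons, List.count_cons, beq_iff_eq]
      cases t with
      | nil => simp
      | cons y s =>
        have := ih_a (by simp [h.eq_a_of_cons_cons hx])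
        omega

end GrigReduced

theorem length_phiL_add_count_a_le (w : List Glet) :
    (phiL w).length + w.count .a ≤ w.length := by
  induction w using phiL.induct <;> simp_all [phiL] <;> omega

theorem length_phiR_add_count_a_le (w : List Glet) :
    (phiR w).length + w.count .a ≤ w.length := by
  induction w using phiR.induct <;> simp_all [phiR] <;> omega

theorem cast_lt_div_two_add_one_of_two_mul_le {n m : ℕ} (h : 2 * n ≤ m + 1) :
    (n : ℝ) < m / 2 + 1 := by
  have : (2 * n : ℝ) ≤ m + 1 := by exact_mod_cast h
  linarith

theorem stmt_8_general (w : List Glet) (hred : GrigReduced w) :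
    ((phiL w).length : ℝ) < (w.length : ℝ) / 2 + 1 ∧
    ((phiR w).length : ℝ) < (w.length : ℝ) / 2 + 1 := by
  have hw := hred.length_le_count_a.1
  have hL := length_phiL_add_count_a_le w
  have hR := length_phiR_add_count_a_le w
  exact ⟨cast_lt_div_two_add_one_of_two_mul_le (by omega),
    cast_lt_div_two_add_one_of_two_mul_le (by omega)⟩

/-- if `w` is a reduced word over `{a,b,c,d}` of length `> 1`
representing an element of the level-1 stabiliser `G₁` (i.e. with an even number
of occurrences of `a`), then `|φ_L(w)| < ½|w| + 1` and `|φ_R(w)| < ½|w| + 1`. -/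
theorem stmt_8 (w : List Glet) (hred : GrigReduced w)
    (hG1 : Even (w.count Glet.a)) (hlen : 1 < w.length) :
    ((phiL w).length : ℝ) < (w.length : ℝ) / 2 + 1 ∧
    ((phiR w).length : ℝ) < (w.length : ℝ) / 2 + 1 :=
  stmt_8_general w hred
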